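/- Let H be a complex Hilbert space, α a linear isometry of H, E the set of unimodular eigenvectors of α, K = closure(span E), and x ∈ K^⊥. Assume the Cesàro averages (1/n)∑_{l=1}^{n} e^{2πilt} α^l(x) converge in norm for every t (mean ergodic theorem). Then for every t ∈ ℝ: lim_{n→∞} (1/n) ∑_{l=1}^{n} e^{2πilt} ⟨x, α^l(x)⟩ = 0. -/

import Mathlib

/-!
Put `c = e^{2πit}` and `T = c • α`. The twisted averages in the hypothesis are the Birkhoff
averages of `T` along the orbit of `T x`, which is bounded because `T` is an isometry; hence their
limit `x̄` is fixed by `T`. So `α x̄ = c⁻¹ • x̄` is a unimodular eigenvector and lies in `K`, which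
is orthogonal to `x`. The scalar averages are `⟪x, ·⟫` of the twisted averages, so they tend to
`⟪x, x̄⟫ = 0`.
-/

open Filter Finset
open scoped InnerProductSpace

theorem birkhoffSum_apply_eq_sum_Icc {α M : Type*} [AddCommMonoid M] (f : α → α) (g : α → M)
    (n : ℕ) (x : α) : birkhoffSum f g n (f x) = ∑ l ∈ Icc 1 n, g (f^[l] x) := by
  rw [← Ico_add_one_right_eq_Icc, ← zero_add 1, ← sum_Ico_add', ← range_eq_Ico]
  simp only [birkhoffSum, Function.iterate_succ_apply]

section FixedPoint

variable {𝕜 E F : Type*} [RCLike 𝕜] [NormedAddCommGroup E] [NormedSpace 𝕜 E]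
  [FunLike F E E] [AddMonoidHomClass F E E]

theorem birkhoffAverage_id_map_apply (T : F) (n : ℕ) (x : E) :
    birkhoffAverage 𝕜 T id n (T x) = T (birkhoffAverage 𝕜 T id n x) := by
  rw [map_birkhoffAverage 𝕜 𝕜]
  simp only [birkhoffAverage, birkhoffSum, Function.comp_apply, id,
    ← Function.iterate_succ_apply, Function.iterate_succ_apply']

theorem isFixedPt_of_tendsto_birkhoffAverage {T : F} (hT : Continuous T) {x y : E}
    (hx : Bornology.IsBounded (Set.range fun n ↦ (⇑T)^[n] x))
    (hy : Tendsto (birkhoffAverage 𝕜 T id · x) atTop (nhds y)) : Function.IsFixedPt T y := by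
  have hTy : Tendsto (fun n ↦ T (birkhoffAverage 𝕜 T id n x)) atTop (nhds y) := by
    simpa [birkhoffAverage_id_map_apply] using
      hy.add (tendsto_birkhoffAverage_apply_sub_birkhoffAverage (g := id) 𝕜 hx)
  exact tendsto_nhds_unique ((hT.tendsto y).comp hy) hTy

end FixedPoint

section Twist

variable {𝕜 E : Type*} [NormedField 𝕜] [NormedAddCommGroup E] [NormedSpace 𝕜 E]

theorem ContinuousLinearMap.iterate_smul_apply (c : 𝕜) (T : E →L[𝕜] E) (l : ℕ) (x : E) :
    (⇑(c • T))^[l] x = c ^ l • (⇑T)^[l] x := by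
  induction l with
  | zero => simp
  | succ l ih =>
    rw [Function.iterate_succ_apply', Function.iterate_succ_apply', ih, smul_apply, map_smul,
      smul_smul, pow_succ']

theorem LinearIsometry.norm_iterate_apply (α : E →ₗᵢ[𝕜] E) (n : ℕ) (x : E) :
    ‖(⇑α)^[n] x‖ = ‖x‖ := by
  induction n with
  | zero => rfl
  | succ n ih => rw [Function.iterate_succ_apply', α.norm_map, ih]

theorem LinearIsometry.isBounded_range_iterate_smul (α : E →ₗᵢ[𝕜] E) {c : 𝕜} (hc : ‖c‖ = 1)
    (x : E) : Bornology.IsBounded (Set.range fun n ↦ (⇑(c • α.toContinuousLinearMap))^[n] x) := by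
  refine isBounded_iff_forall_norm_le.2 ⟨‖x‖, ?_⟩
  rintro _ ⟨n, rfl⟩
  dsimp only
  rw [ContinuousLinearMap.iterate_smul_apply, norm_smul, norm_pow, hc, one_pow, one_mul,
    coe_toContinuousLinearMap, α.norm_iterate_apply]

end Twist

theorem scalar_twisted_averages_tendsto_zero_general
    {H : Type*} [NormedAddCommGroup H] [InnerProductSpace ℂ H]
    (α : H →ₗᵢ[ℂ] H)
    (E : Set H) (hE : E = {y : H | ∃ μ : ℂ, ‖μ‖ = 1 ∧ α y = μ • y})
    (K : Submodule ℂ H) (hK : K = (Submodule.span ℂ E).topologicalClosure)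
    (x : H) (hx : x ∈ Kᗮ)
    (hme : ∀ t : ℝ, ∃ xbar : H, Tendsto (fun n : ℕ =>
        (n : ℂ)⁻¹ • ∑ l ∈ Finset.Icc 1 n,
          Complex.exp (2 * Real.pi * Complex.I * l * t) • (⇑α)^[l] x)
      atTop (nhds xbar)) :
    ∀ t : ℝ, Tendsto (fun n : ℕ =>
        (n : ℂ)⁻¹ * ∑ l ∈ Finset.Icc 1 n,
          Complex.exp (2 * Real.pi * Complex.I * l * t) * ⟪x, (⇑α)^[l] x⟫_ℂ)
      atTop (nhds 0) := by
  intro t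
  obtain ⟨xbar, hlim⟩ := hme t
  set c := Complex.exp (↑(2 * Real.pi * t) * Complex.I)
  have hc : ‖c‖ = 1 := Complex.norm_exp_ofReal_mul_I _
  set T : H →L[ℂ] H := c • α.toContinuousLinearMap
  have hexp (l : ℕ) : Complex.exp (2 * Real.pi * Complex.I * l * t) = c ^ l := by
    rw [← Complex.exp_nat_mul]; push_cast; ring_nf
  have hT (n : ℕ) : (n : ℂ)⁻¹ • ∑ l ∈ Icc 1 n,
      Complex.exp (2 * Real.pi * Complex.I * l * t) • (⇑α)^[l] x
        = birkhoffAverage ℂ T id n (T x) := by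
    simp only [birkhoffAverage, birkhoffSum_apply_eq_sum_Icc, id, T,
      ContinuousLinearMap.iterate_smul_apply, LinearIsometry.coe_toContinuousLinearMap, hexp]
  simp only [hT] at hlim
  have hfix : c • α xbar = xbar :=
    isFixedPt_of_tendsto_birkhoffAverage T.continuous (α.isBounded_range_iterate_smul hc _) hlim
  have hxbarE : xbar ∈ E := hE ▸ ⟨c⁻¹, by rw [norm_inv, hc, inv_one],
    (eq_inv_smul_iff₀ (Complex.exp_ne_zero _)).2 hfix⟩
  have hxbarK : xbar ∈ K := hK ▸ Submodule.le_topologicalClosure _ (Submodule.subset_span hxbarE)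
  have hinner : ⟪x, xbar⟫_ℂ = 0 :=
    inner_eq_zero_symm.1 ((Submodule.mem_orthogonal K x).1 hx xbar hxbarK)
  have hscalar : Tendsto (fun n ↦ ⟪x, birkhoffAverage ℂ T id n (T x)⟫_ℂ) atTop (nhds 0) :=
    hinner ▸ tendsto_const_nhds.inner hlim
  refine hscalar.congr fun n ↦ ?_
  simp only [← hT n, inner_smul_right, inner_sum]

/-- for x orthogonal to the closed span K of the unimodular
eigenvectors of the isometry α, assuming the twisted Cesàro averages converge in
norm for every t, the scalar averages (1/n) ∑_{l=1}^n e^{2πilt} ⟪x, α^l x⟫ tend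
to 0 for every t. -/
theorem scalar_twisted_averages_tendsto_zero
    {H : Type*} [NormedAddCommGroup H] [InnerProductSpace ℂ H] [CompleteSpace H]
    (α : H →ₗᵢ[ℂ] H)
    (E : Set H) (hE : E = {y : H | ∃ μ : ℂ, ‖μ‖ = 1 ∧ α y = μ • y})
    (K : Submodule ℂ H) (hK : K = (Submodule.span ℂ E).topologicalClosure)
    (x : H) (hx : x ∈ Kᗮ)
    (hme : ∀ t : ℝ, ∃ xbar : H, Tendsto (fun n : ℕ =>
        (n : ℂ)⁻¹ • ∑ l ∈ Finset.Icc 1 n,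
          Complex.exp (2 * Real.pi * Complex.I * l * t) • (⇑α)^[l] x)
      atTop (nhds xbar)) :
    ∀ t : ℝ, Tendsto (fun n : ℕ =>
        (n : ℂ)⁻¹ * ∑ l ∈ Finset.Icc 1 n,
          Complex.exp (2 * Real.pi * Complex.I * l * t) * ⟪x, (⇑α)^[l] x⟫_ℂ)
      atTop (nhds 0) :=
  scalar_twisted_averages_tendsto_zero_general α E hE K hK x hx hme
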